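/- In any feasible MRED solution with all swapping probabilities q_k ≤ 1, the total net end-to-end EDR Σ_{s:t∈U} (I(s:t) − Ω(s:t)) is at most the total elementary ebit generation rate Σ_{e=(m:n)∈E} p_e · c_e · g_{m:n}, and hence at most Σ_{e∈E} p_e · c_e. -/

import Mathlib

/-!
Summed over all ordered pairs, `I - Ω` is the link generation term plus the swap inputs minus
the swap outputs. By balance (2a) the swap input of `m:n` at `k` is `q_k f(m:k → m:n)`, and
exchanging `n` and `k` matches it against the `m:n → m:k` part of `Ω(m:n)`; as `q_k ≤ 1`,
swapping never increases the total. Pairs outside `U` contribute nothing by conservation (2b).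
-/

open Finset

/-- Input rate `I(m:n)`: ebits generated along a physical link `m:n` plus ebits obtained
by swapping at intermediate nodes `k`, discounted by success probabilities (Eq. (2d)). -/
noncomputable def Iin {V : Type*} [Fintype V] [DecidableEq V] (Edge : V → V → Prop) [DecidableRel Edge]
    (p c : V → V → ℝ) (q : V → ℝ) (g : V → V → ℝ) (f : V × V → V × V → ℝ)
    (m n : V) : ℝ :=
  (if Edge m n then p m n * c m n * g m n else 0) +
    ∑ k ∈ univ.filter fun k => k ≠ m ∧ k ≠ n,
      q k / 2 * (f (m, k) (m, n) + f (k, n) (m, n))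

/-- Output rate `Ω(m:n)`: `m:n`-ebits consumed for swapping toward other pairs (Eq. (2e)). -/
noncomputable def Omeg {V : Type*} [Fintype V] [DecidableEq V] (f : V × V → V × V → ℝ) (m n : V) : ℝ :=
  ∑ k ∈ univ.filter fun k => k ≠ m ∧ k ≠ n, (f (m, n) (m, k) + f (m, n) (k, n))

/-- Feasibility for the MRED program (1): nonnegativity, `g ∈ [0,1]`, unordered-pair
symmetry of `f`, no degenerate self-pairs, balanced swapping (2a), flow conservation for
non-SD pairs (2b), and surplus for SD pairs (2c). -/
def MREDFeasible {V : Type*} [Fintype V] [DecidableEq V] (Edge : V → V → Prop)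
    [DecidableRel Edge] (p c : V → V → ℝ) (q : V → ℝ) (U : Finset (V × V))
    (f : V × V → V × V → ℝ) (g : V → V → ℝ) : Prop :=
  (∀ a b, 0 ≤ f a b) ∧
  (∀ m n, 0 ≤ g m n ∧ g m n ≤ 1) ∧
  (∀ a x, f a x = f a.swap x) ∧
  (∀ x b, f x b = f x b.swap) ∧
  (∀ a b, a.1 = a.2 ∨ b.1 = b.2 → f a b = 0) ∧
  (∀ m k n, f (m, k) (m, n) = f (k, n) (m, n)) ∧
  (∀ m n, (m, n) ∉ U → Iin Edge p c q g f m n = Omeg f m n) ∧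
  (∀ m n, (m, n) ∈ U → Omeg f m n ≤ Iin Edge p c q g f m n)

section TripleSums

variable {V M : Type*} [Fintype V] [DecidableEq V] [AddCommMonoid M]

theorem sum_filter_ne_and_ne_of_eq_zero {m n : V} (H : V → M) (hm : H m = 0) :
    ∑ k ∈ univ.filter (fun k => k ≠ m ∧ k ≠ n), H k = ∑ k ∈ univ.filter (· ≠ n), H k := by
  refine sum_subset (fun k hk => by simp_all) fun k hk hk' => ?_
  obtain rfl : k = m := by simp_all
  exact hm

theorem sum_sum_sum_filter_ne_ne_swap (F : V → V → V → M) (h₁ : ∀ m k, F m m k = 0)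
    (h₂ : ∀ m n, F m n m = 0) :
    ∑ m, ∑ n, ∑ k ∈ univ.filter (fun k => k ≠ m ∧ k ≠ n), F m k n =
      ∑ m, ∑ n, ∑ k ∈ univ.filter (fun k => k ≠ m ∧ k ≠ n), F m n k := by
  calc _ = ∑ m, ∑ n, ∑ k ∈ univ.filter (· ≠ n), F m k n :=
        sum_congr rfl fun m _ => sum_congr rfl fun n _ =>
          sum_filter_ne_and_ne_of_eq_zero (F m · n) (h₁ m n)
    _ = ∑ m, ∑ n, ∑ k ∈ univ.filter (· ≠ n), F m n k := by
        refine sum_congr rfl fun m _ => ?_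
        simp only [sum_filter]
        rw [sum_comm]
        exact sum_congr rfl fun n _ => sum_congr rfl fun k _ => by simp only [ne_comm]
    _ = _ :=
        (sum_congr rfl fun m _ => sum_congr rfl fun n _ =>
          sum_filter_ne_and_ne_of_eq_zero (F m n) (h₂ m n)).symm

end TripleSums

section MRED

variable {V : Type*} [Fintype V] (Edge : V → V → Prop) [DecidableRel Edge]
  (p c : V → V → ℝ) (g : V → V → ℝ)

theorem sum_link_le_sum_link_capacity (hg1 : ∀ m n, g m n ≤ 1)
    (hpc : ∀ m n, Edge m n → 0 ≤ p m n * c m n) :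
    ∑ mn ∈ univ.filter (fun mn : V × V => Edge mn.1 mn.2),
        p mn.1 mn.2 * c mn.1 mn.2 * g mn.1 mn.2 ≤
      ∑ mn ∈ univ.filter (fun mn : V × V => Edge mn.1 mn.2), p mn.1 mn.2 * c mn.1 mn.2 :=
  sum_le_sum fun _ hmn => mul_le_of_le_one_right (hpc _ _ (mem_filter.1 hmn).2) (hg1 _ _)

variable [DecidableEq V] {q : V → ℝ} {f : V × V → V × V → ℝ}

theorem Iin_eq_of_balanced (hbal : ∀ m k n, f (m, k) (m, n) = f (k, n) (m, n)) (m n : V) :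
    Iin Edge p c q g f m n = (if Edge m n then p m n * c m n * g m n else 0) +
      ∑ k ∈ univ.filter (fun k => k ≠ m ∧ k ≠ n), q k * f (m, k) (m, n) := by
  unfold Iin
  congr 1
  refine sum_congr rfl fun k _ => ?_
  rw [← hbal m k n]
  ring

theorem sum_swap_input_le_sum_Omeg (hf0 : ∀ a b, 0 ≤ f a b)
    (hdeg : ∀ a b, a.1 = a.2 ∨ b.1 = b.2 → f a b = 0) (hq1 : ∀ k, q k ≤ 1) :
    ∑ m, ∑ n, ∑ k ∈ univ.filter (fun k => k ≠ m ∧ k ≠ n), q k * f (m, k) (m, n) ≤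
      ∑ m, ∑ n, Omeg f m n := by
  calc ∑ m, ∑ n, ∑ k ∈ univ.filter (fun k => k ≠ m ∧ k ≠ n), q k * f (m, k) (m, n)
      ≤ ∑ m, ∑ n, ∑ k ∈ univ.filter (fun k => k ≠ m ∧ k ≠ n), f (m, k) (m, n) := by
        gcongr with m _ n _ k
        exact mul_le_of_le_one_left (hf0 _ _) (hq1 k)
    _ = ∑ m, ∑ n, ∑ k ∈ univ.filter (fun k => k ≠ m ∧ k ≠ n), f (m, n) (m, k) :=
        sum_sum_sum_filter_ne_ne_swap (fun m n k => f (m, n) (m, k))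
          (fun _ _ => hdeg _ _ (Or.inl rfl)) (fun _ _ => hdeg _ _ (Or.inr rfl))
    _ ≤ ∑ m, ∑ n, Omeg f m n := by
        unfold Omeg
        gcongr with m _ n _ k
        exact le_add_of_nonneg_right (hf0 _ _)

theorem sum_Iin_sub_Omeg_le_sum_link (hf0 : ∀ a b, 0 ≤ f a b)
    (hdeg : ∀ a b, a.1 = a.2 ∨ b.1 = b.2 → f a b = 0)
    (hbal : ∀ m k n, f (m, k) (m, n) = f (k, n) (m, n)) (hq1 : ∀ k, q k ≤ 1) :
    ∑ mn : V × V, (Iin Edge p c q g f mn.1 mn.2 - Omeg f mn.1 mn.2) ≤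
      ∑ mn ∈ univ.filter (fun mn : V × V => Edge mn.1 mn.2),
        p mn.1 mn.2 * c mn.1 mn.2 * g mn.1 mn.2 := by
  have hswap := sum_swap_input_le_sum_Omeg hf0 hdeg hq1
  simp only [Iin_eq_of_balanced Edge p c g hbal, sum_sub_distrib, sum_add_distrib, sum_filter,
    Fintype.sum_prod_type] at hswap ⊢
  linarith

end MRED

theorem stmt7_general {V : Type*} [Fintype V] [DecidableEq V] (Edge : V → V → Prop)
    [DecidableRel Edge] (p c : V → V → ℝ) (q : V → ℝ) (U : Finset (V × V))
    (f : V × V → V × V → ℝ) (g : V → V → ℝ)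
    (hq1 : ∀ k, q k ≤ 1)
    (hpe : ∀ m n, Edge m n → 0 < p m n ∧ p m n ≤ 1)
    (hce : ∀ m n, Edge m n → 0 < c m n)
    (hfeas : MREDFeasible Edge p c q U f g) :
    (∑ mn ∈ U, (Iin Edge p c q g f mn.1 mn.2 - Omeg f mn.1 mn.2)) ≤
      (∑ mn ∈ Finset.univ.filter fun mn : V × V => Edge mn.1 mn.2,
        p mn.1 mn.2 * c mn.1 mn.2 * g mn.1 mn.2) ∧
    (∑ mn ∈ Finset.univ.filter fun mn : V × V => Edge mn.1 mn.2,
        p mn.1 mn.2 * c mn.1 mn.2 * g mn.1 mn.2) ≤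
      ∑ mn ∈ Finset.univ.filter fun mn : V × V => Edge mn.1 mn.2,
        p mn.1 mn.2 * c mn.1 mn.2 := by
  obtain ⟨hf0, hg, -, -, hdeg, hbal, hcons, -⟩ := hfeas
  have hU : ∑ mn ∈ U, (Iin Edge p c q g f mn.1 mn.2 - Omeg f mn.1 mn.2) =
      ∑ mn : V × V, (Iin Edge p c q g f mn.1 mn.2 - Omeg f mn.1 mn.2) :=
    sum_subset (subset_univ U) fun mn _ hmn => sub_eq_zero.2 (hcons _ _ hmn)
  refine ⟨hU ▸ sum_Iin_sub_Omeg_le_sum_link Edge p c g hf0 hdeg hbal hq1,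
    sum_link_le_sum_link_capacity Edge p c g (fun m n => (hg m n).2) fun m n hmn => ?_⟩
  exact (mul_pos (hpe m n hmn).1 (hce m n hmn)).le

/-- In any feasible MRED solution with swapping probabilities `q_k ≤ 1`, the total net
end-to-end EDR of the SD pairs is at most the total elementary ebit generation rate
`Σ_{e∈E} p_e c_e g_e`, and hence at most `Σ_{e∈E} p_e c_e`. -/
theorem stmt7 {V : Type*} [Fintype V] [DecidableEq V] (Edge : V → V → Prop)
    [DecidableRel Edge] (p c : V → V → ℝ) (q : V → ℝ) (U : Finset (V × V))
    (f : V × V → V × V → ℝ) (g : V → V → ℝ)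
    (hq0 : ∀ k, 0 ≤ q k) (hq1 : ∀ k, q k ≤ 1)
    (hEsymm : ∀ m n, Edge m n → Edge n m)
    (hUsymm : ∀ mn ∈ U, Prod.swap mn ∈ U)
    (hpe : ∀ m n, Edge m n → 0 < p m n ∧ p m n ≤ 1)
    (hce : ∀ m n, Edge m n → 0 < c m n)
    (hpsymm : ∀ m n, p m n = p n m) (hcsymm : ∀ m n, c m n = c n m)
    (hgsymm : ∀ m n, g m n = g n m)
    (hfeas : MREDFeasible Edge p c q U f g) :
    (∑ mn ∈ U, (Iin Edge p c q g f mn.1 mn.2 - Omeg f mn.1 mn.2)) ≤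
      (∑ mn ∈ Finset.univ.filter fun mn : V × V => Edge mn.1 mn.2,
        p mn.1 mn.2 * c mn.1 mn.2 * g mn.1 mn.2) ∧
    (∑ mn ∈ Finset.univ.filter fun mn : V × V => Edge mn.1 mn.2,
        p mn.1 mn.2 * c mn.1 mn.2 * g mn.1 mn.2) ≤
      ∑ mn ∈ Finset.univ.filter fun mn : V × V => Edge mn.1 mn.2,
        p mn.1 mn.2 * c mn.1 mn.2 :=
  stmt7_general Edge p c q U f g hq1 hpe hce hfeas
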